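/- Let H be a bialgebra over a field k. The linear map λ: H ⊗ H → H ⊗ H defined by λ(h ⊗ g) = h₁ ⊗ h₂g is bijective if and only if H admits an antipode (i.e., H is a Hopf algebra), in which case the inverse is given by λ⁻¹(h ⊗ g) = h₁ ⊗ S(h₂)g. -/

import Mathlib

/-!
STATEMENT 0: Let `H` be a bialgebra over a field `k`.  The linear map
`λ : H ⊗ H → H ⊗ H`, `λ(h ⊗ g) = h₁ ⊗ h₂ g` is bijective if and only if `H`
admits an antipode (i.e. `H` is a Hopf algebra), in which case the inverse is
given by `λ⁻¹(h ⊗ g) = h₁ ⊗ S(h₂) g`.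
-/

open TensorProduct LinearMap

noncomputable section

variable (k H : Type) [Field k] [Ring H] [Bialgebra k H]

/-- Given a map `f : H → H ⊗ H`, the map `H ⊗ H → H ⊗ H`,
`h ⊗ g ↦ f(h)¹ ⊗ f(h)² g`.  For `f = Δ` this is the Galois map `λ`, and for
`f = (id ⊗ S) ∘ Δ` it is its claimed inverse. -/
def lamAux (f : H →ₗ[k] H ⊗[k] H) : H ⊗[k] H →ₗ[k] H ⊗[k] H :=
  (lTensor H (mul' k H)) ∘ₗ (TensorProduct.assoc k H H H).toLinearMap ∘ₗ (rTensor H f)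

/-- The map `λ(h ⊗ g) = h₁ ⊗ h₂ g`. -/
def lam : H ⊗[k] H →ₗ[k] H ⊗[k] H := lamAux k H Coalgebra.comul

/-- `S` is an antipode for the bialgebra `H`:
`S(h₁) h₂ = ε(h) 1 = h₁ S(h₂)`. -/
def IsAntipode (S : H →ₗ[k] H) : Prop :=
  (mul' k H) ∘ₗ (rTensor H S) ∘ₗ Coalgebra.comul
      = (Algebra.linearMap k H) ∘ₗ Coalgebra.counit ∧
  (mul' k H) ∘ₗ (lTensor H S) ∘ₗ Coalgebra.comul
      = (Algebra.linearMap k H) ∘ₗ Coalgebra.counit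

/-!
The maps `lamAux f`, `h ⊗ g ↦ f(h)¹ ⊗ f(h)² g`, compose like a monoid:
`lamAux f ∘ lamAux g = lamAux (lamAux f ∘ g)` and `lamAux (· ⊗ 1) = id`. By coassociativity,
`lamAux ((id ⊗ S) ∘ Δ)` sends `Δ h` to `h₁ ⊗ (S ⋆ id)(h₂)` and `λ` sends `h₁ ⊗ S(h₂)` to
`h₁ ⊗ (id ⋆ S)(h₂)`, so an antipode gives a two-sided inverse of `λ`.

Conversely, if `λ` is bijective and `β h = λ⁻¹(h ⊗ 1)`, then `λ ∘ lamAux β = lamAux (λ ∘ β) = id`,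
so `λ⁻¹ = lamAux β`. Since `(ε ⊗ id) ∘ lamAux β = m ∘ (S ⊗ id)` for `S = (ε ⊗ id) ∘ β`,
evaluating `(ε ⊗ id) ∘ λ⁻¹` on `Δ h = λ(h ⊗ 1)` gives `S ⋆ id = ηε`. Then
`lamAux ((id ⊗ S) ∘ Δ)` is a left inverse of `λ`, hence also a right one, and applying
`(ε ⊗ id) ∘ λ = m` to `λ(h₁ ⊗ S(h₂)) = h ⊗ 1` gives `id ⋆ S = ηε`.
-/

section Counit

variable {R C : Type*} [CommSemiring R]

def counitLeft [AddCommMonoid C] [Module R C] [CoalgebraStruct R C] : C ⊗[R] C →ₗ[R] C :=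
  (TensorProduct.lid R C).toLinearMap ∘ₗ rTensor C Coalgebra.counit

lemma counitLeft_tmul [AddCommMonoid C] [Module R C] [CoalgebraStruct R C] (a b : C) :
    counitLeft (a ⊗ₜ[R] b) = Coalgebra.counit (R := R) a • b := by
  simp [counitLeft]

lemma counitLeft_comp_comul [AddCommMonoid C] [Module R C] [Coalgebra R C] :
    counitLeft ∘ₗ Coalgebra.comul = (LinearMap.id : C →ₗ[R] C) := by
  ext c
  simp [counitLeft, Coalgebra.rTensor_counit_comul]

variable [Semiring C] [Bialgebra R C]

lemma counitLeft_lTensor_mulRight (g : C) (x : C ⊗[R] C) :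
    counitLeft (lTensor C (mulRight R g) x) = counitLeft x * g := by
  induction x using TensorProduct.induction_on with
  | zero => simp
  | tmul a b => simp [counitLeft_tmul]
  | add u v hu hv => simp only [map_add, add_mul, hu, hv]

lemma counitLeft_comp_flip_mk_one :
    counitLeft ∘ₗ (mk R C C).flip 1 = Algebra.linearMap R C ∘ₗ Coalgebra.counit := by
  ext c
  simp [counitLeft_tmul, Algebra.smul_def]

lemma lTensor_unit_counit_comp_comul :
    lTensor C (Algebra.linearMap R C ∘ₗ Coalgebra.counit) ∘ₗ Coalgebra.comul
      = (mk R C C).flip 1 := by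
  ext c
  simp [lTensor_comp_apply, Coalgebra.lTensor_counit_comul]

end Counit

section Galois

variable {k H}

lemma lamAux_tmul (f : H →ₗ[k] H ⊗[k] H) (h g : H) :
    lamAux k H f (h ⊗ₜ g) = lTensor H (mulRight k g) (f h) := by
  simp only [lamAux, coe_comp, LinearEquiv.coe_coe, Function.comp_apply, rTensor_tmul]
  induction f h using TensorProduct.induction_on with
  | zero => simp
  | tmul a b => simp
  | add x y hx hy => simp only [add_tmul, map_add, hx, hy]

lemma lamAux_lTensor_mulRight (f : H →ₗ[k] H ⊗[k] H) (g : H) (x : H ⊗[k] H) :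
    lamAux k H f (lTensor H (mulRight k g) x) = lTensor H (mulRight k g) (lamAux k H f x) := by
  induction x using TensorProduct.induction_on with
  | zero => simp
  | tmul h b =>
    simp only [lTensor_tmul, mulRight_apply, lamAux_tmul]
    induction f h using TensorProduct.induction_on with
    | zero => simp
    | tmul a c => simp [mul_assoc]
    | add u v hu hv => simp only [map_add, hu, hv]
  | add u v hu hv => simp only [map_add, hu, hv]

lemma lamAux_comp_lamAux (f g : H →ₗ[k] H ⊗[k] H) :
    lamAux k H f ∘ₗ lamAux k H g = lamAux k H (lamAux k H f ∘ₗ g) := by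
  ext h b
  simp only [AlgebraTensorModule.curry_apply, curry_apply, coe_restrictScalars, coe_comp,
    Function.comp_apply, lamAux_tmul, lamAux_lTensor_mulRight]

lemma lamAux_comp_flip_mk_one (f : H →ₗ[k] H ⊗[k] H) :
    lamAux k H f ∘ₗ (mk k H H).flip 1 = f := by
  ext h
  simp only [coe_comp, Function.comp_apply, flip_apply, mk_apply, lamAux_tmul, mulRight_one,
    lTensor_id, id_apply]

lemma lamAux_flip_mk_one : lamAux k H ((mk k H H).flip 1) = LinearMap.id := by
  ext h b
  simp [lamAux_tmul]

lemma lamAux_comp_lamAux_eq_id {f g : H →ₗ[k] H ⊗[k] H}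
    (hfg : lamAux k H f ∘ₗ g = (mk k H H).flip 1) :
    lamAux k H f ∘ₗ lamAux k H g = LinearMap.id := by
  rw [lamAux_comp_lamAux, hfg, lamAux_flip_mk_one]

/-- In Sweedler notation, `h₁ ⊗ φ(h₂) ψ(h₃) = h₁ ⊗ (φ ⋆ ψ)(h₂)` (coassociativity). -/
lemma lamAux_lTensor_comul_comp_lTensor_comul (φ ψ : H →ₗ[k] H) :
    lamAux k H (lTensor H φ ∘ₗ Coalgebra.comul) ∘ₗ lTensor H ψ ∘ₗ Coalgebra.comul
      = lTensor H (mul' k H ∘ₗ map φ ψ ∘ₗ Coalgebra.comul) ∘ₗ Coalgebra.comul := by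
  have hmap : rTensor H (lTensor H φ ∘ₗ Coalgebra.comul) ∘ₗ lTensor H ψ
      = map (lTensor H φ) ψ ∘ₗ rTensor H Coalgebra.comul := by
    rw [rTensor_comp_lTensor, map_comp_rTensor]
  have hassoc : (TensorProduct.assoc k H H H).toLinearMap ∘ₗ map (lTensor H φ) ψ
      = lTensor H (map φ ψ) ∘ₗ TensorProduct.assoc k H H H :=
    (map_map_comp_assoc_eq _ _ _).symm
  calc _ = lTensor H (mul' k H) ∘ₗ (TensorProduct.assoc k H H H).toLinearMap ∘ₗ
          (rTensor H (lTensor H φ ∘ₗ Coalgebra.comul) ∘ₗ lTensor H ψ) ∘ₗ Coalgebra.comul := by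
        simp only [lamAux, comp_assoc]
    _ = lTensor H (mul' k H) ∘ₗ ((TensorProduct.assoc k H H H).toLinearMap ∘ₗ
          map (lTensor H φ) ψ) ∘ₗ rTensor H Coalgebra.comul ∘ₗ Coalgebra.comul := by
        rw [hmap]; simp only [comp_assoc]
    _ = lTensor H (mul' k H ∘ₗ map φ ψ) ∘ₗ ((TensorProduct.assoc k H H H).toLinearMap
          ∘ₗ rTensor H Coalgebra.comul ∘ₗ Coalgebra.comul) := by
        rw [hassoc, lTensor_comp]; simp only [comp_assoc]
    _ = _ := by
        rw [Coalgebra.coassoc]; simp only [lTensor_comp, comp_assoc]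

lemma lamAux_lTensor_comul_comp_lam {S : H →ₗ[k] H}
    (hS : mul' k H ∘ₗ rTensor H S ∘ₗ Coalgebra.comul
      = Algebra.linearMap k H ∘ₗ Coalgebra.counit) :
    lamAux k H (lTensor H S ∘ₗ Coalgebra.comul) ∘ₗ lam k H = LinearMap.id := by
  refine lamAux_comp_lamAux_eq_id ?_
  have h := lamAux_lTensor_comul_comp_lTensor_comul S LinearMap.id
  rwa [lTensor_id, id_comp, show map S LinearMap.id = rTensor H S from rfl, hS,
    lTensor_unit_counit_comp_comul] at h

lemma lam_comp_lamAux_lTensor_comul {S : H →ₗ[k] H}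
    (hS : mul' k H ∘ₗ lTensor H S ∘ₗ Coalgebra.comul
      = Algebra.linearMap k H ∘ₗ Coalgebra.counit) :
    lam k H ∘ₗ lamAux k H (lTensor H S ∘ₗ Coalgebra.comul) = LinearMap.id := by
  refine lamAux_comp_lamAux_eq_id ?_
  have h := lamAux_lTensor_comul_comp_lTensor_comul LinearMap.id S
  rwa [lTensor_id, id_comp, show map LinearMap.id S = lTensor H S from rfl, hS,
    lTensor_unit_counit_comp_comul] at h

lemma counitLeft_comp_lamAux (f : H →ₗ[k] H ⊗[k] H) :
    counitLeft ∘ₗ lamAux k H f = mul' k H ∘ₗ rTensor H (counitLeft ∘ₗ f) := by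
  ext h b
  simp [lamAux_tmul, counitLeft_lTensor_mulRight]

lemma counitLeft_comp_lam : counitLeft ∘ₗ lam k H = mul' k H := by
  rw [lam, counitLeft_comp_lamAux, counitLeft_comp_comul, rTensor_id, comp_id]

lemma exists_mul_rTensor_comul_eq_of_bijective (hlam : Function.Bijective (lam k H)) :
    ∃ S : H →ₗ[k] H, mul' k H ∘ₗ rTensor H S ∘ₗ Coalgebra.comul
      = Algebra.linearMap k H ∘ₗ Coalgebra.counit := by
  set e := LinearEquiv.ofBijective (lam k H) hlam
  set β := e.symm.toLinearMap ∘ₗ (mk k H H).flip 1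
  have hlamβ : lam k H ∘ₗ lamAux k H β = LinearMap.id :=
    lamAux_comp_lamAux_eq_id (f := Coalgebra.comul) (by ext; exact e.apply_symm_apply _)
  have hβ : lamAux k H β = e.symm.toLinearMap := by
    refine LinearMap.ext fun x => e.injective ?_
    rw [LinearEquiv.coe_coe, e.apply_symm_apply]
    exact LinearMap.congr_fun hlamβ x
  refine ⟨counitLeft ∘ₗ β, ?_⟩
  calc _ = (counitLeft ∘ₗ lamAux k H β) ∘ₗ Coalgebra.comul := by
        rw [counitLeft_comp_lamAux, comp_assoc]
    _ = (counitLeft ∘ₗ e.symm.toLinearMap) ∘ₗ lam k H ∘ₗ (mk k H H).flip 1 := by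
        rw [hβ, lam, lamAux_comp_flip_mk_one]
    _ = counitLeft ∘ₗ (mk k H H).flip 1 := by
        ext
        simp [e]
    _ = _ := counitLeft_comp_flip_mk_one

lemma mul_lTensor_comul_eq_of_bijective (hlam : Function.Bijective (lam k H)) {S : H →ₗ[k] H}
    (hS : mul' k H ∘ₗ rTensor H S ∘ₗ Coalgebra.comul
      = Algebra.linearMap k H ∘ₗ Coalgebra.counit) :
    mul' k H ∘ₗ lTensor H S ∘ₗ Coalgebra.comul
      = Algebra.linearMap k H ∘ₗ Coalgebra.counit := by
  set μ := lamAux k H (lTensor H S ∘ₗ Coalgebra.comul)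
  have hleft : μ ∘ₗ lam k H = LinearMap.id := lamAux_lTensor_comul_comp_lam hS
  have hright : lam k H ∘ₗ μ = LinearMap.id := by
    refine LinearMap.ext fun x => ?_
    obtain ⟨y, rfl⟩ := hlam.2 x
    exact congrArg (lam k H) (LinearMap.congr_fun hleft y)
  calc _ = (counitLeft ∘ₗ lam k H) ∘ₗ μ ∘ₗ (mk k H H).flip 1 := by
        rw [counitLeft_comp_lam, lamAux_comp_flip_mk_one]
    _ = counitLeft ∘ₗ (lam k H ∘ₗ μ) ∘ₗ (mk k H H).flip 1 := by
        simp only [comp_assoc]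
    _ = _ := by rw [hright, id_comp, counitLeft_comp_flip_mk_one]

end Galois

theorem lam_bijective_iff_antipode :
    (Function.Bijective (lam k H) ↔ ∃ S : H →ₗ[k] H, IsAntipode k H S) ∧
    (∀ S : H →ₗ[k] H, IsAntipode k H S →
      lamAux k H ((lTensor H S) ∘ₗ Coalgebra.comul) ∘ₗ lam k H = LinearMap.id ∧
      lam k H ∘ₗ lamAux k H ((lTensor H S) ∘ₗ Coalgebra.comul) = LinearMap.id) := by
  refine ⟨⟨fun hlam => ?_, fun ⟨S, hS⟩ => ?_⟩, fun S hS => ?_⟩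
  · obtain ⟨S, hS⟩ := exists_mul_rTensor_comul_eq_of_bijective hlam
    exact ⟨S, hS, mul_lTensor_comul_eq_of_bijective hlam hS⟩
  · exact Function.bijective_iff_has_inverse.mpr ⟨lamAux k H (lTensor H S ∘ₗ Coalgebra.comul),
      LinearMap.congr_fun (lamAux_lTensor_comul_comp_lam hS.1),
      LinearMap.congr_fun (lam_comp_lamAux_lTensor_comul hS.2)⟩
  · exact ⟨lamAux_lTensor_comul_comp_lam hS.1, lam_comp_lamAux_lTensor_comul hS.2⟩

end
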